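/- Let Φ be a semi-coherent structure function on n ≥ 1 components with structural signature s, let T_1,…,T_n be i.i.d. exponential random variables with rate μ > 0, let T_fail := inf{ t ≥ 0 : Φ(1{T_1 > t},…,1{T_n > t}) = 0 }, fix r ∈ {1,…,n}, and set T_rep := min{T_fail, T_{r:n}}. Then the number N(T_rep) := #{ i : T_i ≤ T_rep } of failed components at the first repair satisfies: P( N(T_rep) = j ) = s_j for 1 ≤ j < r, P( N(T_rep) = r ) = Σ_{k=r}^{n} s_k, and P( N(T_rep) = j ) = 0 for j > r. -/

import Mathlib

open MeasureTheory ProbabilityTheory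

/-- `S̄ k`: the proportion of states with exactly `k` failed components in which
the system works. -/
noncomputable def Sbar (n : ℕ) (Φ : (Fin n → Bool) → Bool) (k : ℕ) : ℝ :=
  ((Finset.univ.filter (fun x : Fin n → Bool =>
      (Finset.univ.filter (fun i => x i = false)).card = k ∧ Φ x = true)).card : ℝ) /
    (n.choose k : ℝ)

/-- The structural signature `s k = S̄_{k-1} - S̄_k`. -/
noncomputable def structSig (n : ℕ) (Φ : (Fin n → Bool) → Bool) (k : ℕ) : ℝ :=
  Sbar n Φ (k - 1) - Sbar n Φ k

/-- The `k`-th order statistic (`k : Fin n`, 0-based) of a tuple `x : Fin n → ℝ`. -/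
noncomputable def orderStat (n : ℕ) (x : Fin n → ℝ) (k : Fin n) : ℝ :=
  x (Tuple.sort x k)

/-- The system failure time: the first nonnegative time at which the structure
function evaluated at the vector of component states (component `i` works at time `t`
iff `t < x i`) is `0`. -/
noncomputable def failTime (n : ℕ) (Φ : (Fin n → Bool) → Bool) (x : Fin n → ℝ) : ℝ :=
  sInf {t : ℝ | 0 ≤ t ∧ Φ (fun i => decide (t < x i)) = false}

/-!
Once the lifetimes are ordered, the components failed after the `k`-th failure form a random
`k`-set. With no ties (almost surely, as the lifetimes are i.i.d. and atomless), exchangeability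
makes this set uniform over the `C(n, k)` possibilities, so the system still works after `k`
failures with probability `S̄_k`: the number `K` of failures at system failure satisfies
`P(K > k) = S̄_k` and hence `P(K = k) = s_k`. Since lifetimes are nonnegative, `T_fail` is the
`K`-th order statistic, so exactly `min K r` components have failed at the first repair.
-/

open Finset

section StructureFunction

variable {n : ℕ}

lemma monotone_card_filter_le (x : Fin n → ℝ) : Monotone fun t => #{i | x i ≤ t} :=
  fun _ _ hst => card_le_card fun _ hi => by
    simp only [mem_filter, mem_univ, true_and] at hi ⊢; exact hi.trans hst

lemma orderStat_le_iff (x : Fin n → ℝ) (m : Fin n) (t : ℝ) :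
    orderStat n x m ≤ t ↔ (m : ℕ) < #{i | x i ≤ t} := by
  have hcard : #{i | (x ∘ Tuple.sort x) i ≤ t} = #{i | x i ≤ t} :=
    card_equiv (Tuple.sort x) (by simp)
  rw [← hcard, Tuple.lt_card_le_iff_apply_le_of_monotone (Tuple.monotone_sort x)]
  rfl

lemma lt_iff_card_filter_le_le (x : Fin n → ℝ) (t : ℝ) (i : Fin n) :
    t < x i ↔ #{j | x j ≤ t} ≤ #{j | x j < x i} := by
  refine ⟨fun h => card_le_card fun j hj => ?_, fun h => ?_⟩
  · simp only [mem_filter, mem_univ, true_and] at hj ⊢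
    exact hj.trans_lt h
  · by_contra! hit
    have hsub : filter (fun j => x j < x i) univ ⊂ filter (fun j => x j ≤ t) univ := by
      refine ssubset_iff_of_subset (fun j hj => ?_) |>.2 ⟨i, by simpa using hit, by simp⟩
      simp only [mem_filter, mem_univ, true_and] at hj ⊢
      exact hj.le.trans hit
    exact (card_lt_card hsub).not_ge h

lemma card_filter_le_eq_add_one {x : Fin n → ℝ} (hx : Function.Injective x) (i : Fin n) :
    #{j | x j ≤ x i} = #{j | x j < x i} + 1 := by
  have : filter (fun j => x j ≤ x i) univ = insert i (filter (fun j => x j < x i) univ) := by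
    ext j
    simp only [mem_filter, mem_univ, true_and, mem_insert, le_iff_lt_or_eq, hx.eq_iff]
    tauto
  rw [this, card_insert_of_notMem (by simp)]

lemma card_filter_lt_lt (x : Fin n → ℝ) (i : Fin n) : #{j | x j < x i} < n := by
  simpa using card_lt_univ_of_notMem (s := filter (fun j => x j < x i) univ) (x := i) (by simp)

lemma card_filter_lt_eq_sort_symm {x : Fin n → ℝ} (hx : Function.Injective x) (i : Fin n) :
    #{j | x j < x i} = (Tuple.sort x).symm i := by
  have hmono : StrictMono (x ∘ Tuple.sort x) :=
    (Tuple.monotone_sort x).strictMono_of_injective (hx.comp (Tuple.sort x).injective)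
  have hcard : #{l | (x ∘ Tuple.sort x) l < x i} = #{j | x j < x i} :=
    card_equiv (Tuple.sort x) (by simp)
  suffices (⟨_, card_filter_lt_lt x i⟩ : Fin n) = (Tuple.sort x).symm i from
    congrArg Fin.val this
  refine eq_of_forall_lt_iff fun m => ?_
  rw [Fin.lt_def]
  dsimp only
  rw [← hcard, Tuple.lt_card_lt_iff_apply_lt_of_monotone (Tuple.monotone_sort x),
    ← hmono.lt_iff_lt]
  simp

lemma card_filter_le_orderStat {x : Fin n → ℝ} (hx : Function.Injective x) (m : Fin n) :
    #{i | x i ≤ orderStat n x m} = m + 1 := by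
  rw [orderStat, card_filter_le_eq_add_one hx, card_filter_lt_eq_sort_symm hx,
    Equiv.symm_apply_apply]

/-- The state vector once the `k` earliest lifetimes of `x` have expired. -/
noncomputable def stateAfter (x : Fin n → ℝ) (k : ℕ) : Fin n → Bool :=
  fun i => decide (k ≤ #{j | x j < x i})

lemma stateAfter_antitone (x : Fin n → ℝ) : Antitone (stateAfter x) :=
  fun _ _ hkl i => by
    simp only [stateAfter, Bool.le_iff_imp, decide_eq_true_eq]
    exact hkl.trans

lemma stateAfter_zero (x : Fin n → ℝ) : stateAfter x 0 = fun _ => true := by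
  funext i
  simp [stateAfter]

lemma stateAfter_card (x : Fin n → ℝ) : stateAfter x n = fun _ => false := by
  funext i
  simpa [stateAfter] using card_filter_lt_lt x i

lemma stateAfter_card_filter_le (x : Fin n → ℝ) (t : ℝ) :
    stateAfter x #{i | x i ≤ t} = fun i => decide (t < x i) := by
  funext i
  simp only [stateAfter, lt_iff_card_filter_le_le x t i]

lemma stateAfter_comp_perm (x : Fin n → ℝ) (σ : Equiv.Perm (Fin n)) (k : ℕ) :
    stateAfter (x ∘ σ) k = stateAfter x k ∘ σ := by
  funext i
  simp only [stateAfter, Function.comp_apply]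
  congr 2
  exact card_equiv σ (by simp)

lemma card_stateAfter_eq_false {x : Fin n → ℝ} (hx : Function.Injective x) {k : ℕ}
    (hk : k ≤ n) : #{i | stateAfter x k i = false} = k := by
  simp only [stateAfter, decide_eq_false_iff_not, not_le, card_filter_lt_eq_sort_symm hx]
  rw [card_equiv (Tuple.sort x).symm (t := filter (fun m : Fin n => (m : ℕ) < k) univ) (by simp),
    Fin.card_filter_val_lt, min_eq_right hk]

lemma measurable_stateAfter (k : ℕ) : Measurable fun x : Fin n → ℝ => stateAfter x k := by
  refine measurable_pi_lambda _ fun i =>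
    (measurable_from_nat (f := fun m => decide (k ≤ m))).comp ?_
  simp only [card_filter]
  refine Finset.measurable_sum _ fun j _ => Measurable.ite ?_ measurable_const measurable_const
  exact measurableSet_lt (measurable_pi_apply j) (measurable_pi_apply i)

lemma measurableSet_stateAfter_eq (k : ℕ) (y : Fin n → Bool) :
    MeasurableSet {x : Fin n → ℝ | stateAfter x k = y} :=
  measurable_stateAfter k (measurableSet_singleton y)

lemma exists_perm_comp_eq {y y' : Fin n → Bool}
    (h : #{i | y i = false} = #{i | y' i = false}) : ∃ σ : Equiv.Perm (Fin n), y' ∘ σ = y := by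
  have hfalse : Fintype.card {i // y i = false} = Fintype.card {i // y' i = false} := by
    simpa [Fintype.card_subtype] using h
  have hfib : ∀ c, Fintype.card {i // y i = c} = Fintype.card {i // y' i = c} := by
    rintro (_ | _)
    · exact hfalse
    · simp only [← Bool.not_eq_false]
      rw [Fintype.card_subtype_compl, Fintype.card_subtype_compl, hfalse]
  exact ⟨Equiv.ofFiberEquiv fun c => Fintype.equivOfCardEq (hfib c),
    funext fun i => Equiv.ofFiberEquiv_map _ i⟩

lemma card_filter_card_eq_false (k : ℕ) :
    #{y : Fin n → Bool | #{i | y i = false} = k} = n.choose k := by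
  have : #{y : Fin n → Bool | #{i | y i = false} = k} =
      #(powersetCard k (univ : Finset (Fin n))) := by
    refine card_nbij' (fun y => filter (fun i => y i = false) univ)
      (fun A i => decide (i ∉ A)) ?_ ?_ ?_ ?_
    all_goals intro a ha
    all_goals simp_all
  rw [this, card_powersetCard, card_univ, Fintype.card_fin]

lemma sum_Icc_structSig (Φ : (Fin n → Bool) → Bool) {r : ℕ} (hrn : r ≤ n) :
    ∑ k ∈ Icc r n, structSig n Φ k = Sbar n Φ (r - 1) - Sbar n Φ n := by
  have := sum_Icc_sub hrn fun i => -Sbar n Φ (i - 1)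
  simp only [Nat.add_sub_cancel, sub_neg_eq_add, neg_add_eq_sub] at this
  simpa [structSig] using this

section FailIndex

variable {Φ : (Fin n → Bool) → Bool}

/-- The number of failed components at the moment the system fails. -/
noncomputable def failIndex (Φ : (Fin n → Bool) → Bool) (x : Fin n → ℝ) : ℕ :=
  sInf {k | Φ (stateAfter x k) = false}

lemma lt_failIndex_iff (hΦ : Monotone Φ) (hΦ0 : Φ (fun _ => false) = false)
    (x : Fin n → ℝ) (k : ℕ) : k < failIndex Φ x ↔ Φ (stateAfter x k) = true := by
  have hne : {k | Φ (stateAfter x k) = false}.Nonempty := ⟨n, by simpa [stateAfter_card]⟩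
  refine ⟨fun hk => by simpa using Nat.notMem_of_lt_sInf hk, fun hk => ?_⟩
  by_contra! hle
  have := hΦ (stateAfter_antitone x hle)
  rw [hk, show Φ (stateAfter x (failIndex Φ x)) = false from Nat.sInf_mem hne] at this
  exact absurd this (by decide)

lemma failIndex_le (hΦ0 : Φ (fun _ => false) = false) (x : Fin n → ℝ) : failIndex Φ x ≤ n :=
  Nat.sInf_le (by simpa [stateAfter_card])

lemma one_le_failIndex (hΦ : Monotone Φ) (hΦ0 : Φ (fun _ => false) = false)
    (hΦ1 : Φ (fun _ => true) = true) (x : Fin n → ℝ) : 1 ≤ failIndex Φ x :=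
  (lt_failIndex_iff hΦ hΦ0 x 0).2 (by rwa [stateAfter_zero])

lemma failTime_eq_orderStat (hΦ : Monotone Φ) (hΦ0 : Φ (fun _ => false) = false)
    {x : Fin n → ℝ} (hx : ∀ i, 0 ≤ x i) {m : Fin n} (hm : (m : ℕ) + 1 = failIndex Φ x) :
    failTime n Φ x = orderStat n x m := by
  have hset : {t : ℝ | 0 ≤ t ∧ Φ (fun i => decide (t < x i)) = false} =
      Set.Ici (orderStat n x m) := by
    ext t
    simp only [Set.mem_ofPred_eq, Set.mem_Ici, ← stateAfter_card_filter_le, orderStat_le_iff,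
      Bool.eq_false_iff, ne_eq, ← lt_failIndex_iff hΦ hΦ0, not_lt, ← hm, Nat.add_one_le_iff]
    exact and_iff_right_of_imp fun h => (hx _).trans ((orderStat_le_iff x m t).2 h)
  rw [failTime, hset, csInf_Ici]

lemma card_filter_le_failTime (hΦ : Monotone Φ) (hΦ0 : Φ (fun _ => false) = false)
    (hΦ1 : Φ (fun _ => true) = true) {x : Fin n → ℝ} (hx : Function.Injective x)
    (hx0 : ∀ i, 0 ≤ x i) : #{i | x i ≤ failTime n Φ x} = failIndex Φ x := by
  have h1 := one_le_failIndex hΦ hΦ0 hΦ1 x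
  have hn := failIndex_le hΦ0 x
  rw [failTime_eq_orderStat hΦ hΦ0 hx0 (m := ⟨failIndex Φ x - 1, by omega⟩) (by simp; omega),
    card_filter_le_orderStat hx]
  simp only
  omega

lemma card_filter_le_min_failTime_orderStat (hΦ : Monotone Φ)
    (hΦ0 : Φ (fun _ => false) = false) (hΦ1 : Φ (fun _ => true) = true) {x : Fin n → ℝ}
    (hx : Function.Injective x) (hx0 : ∀ i, 0 ≤ x i) (m : Fin n) :
    #{i | x i ≤ min (failTime n Φ x) (orderStat n x m)} = min (failIndex Φ x) (m + 1) := by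
  rw [(monotone_card_filter_le x).map_min, card_filter_le_failTime hΦ hΦ0 hΦ1 hx hx0,
    card_filter_le_orderStat hx]

lemma setOf_lt_failIndex (hΦ : Monotone Φ) (hΦ0 : Φ (fun _ => false) = false) (k : ℕ) :
    {x | k < failIndex Φ x} =
      (fun x => stateAfter x k) ⁻¹' ↑(filter (fun y => Φ y = true) univ) := by
  ext x
  simp [lt_failIndex_iff hΦ hΦ0]

lemma measurable_failIndex (hΦ : Monotone Φ) (hΦ0 : Φ (fun _ => false) = false) :
    Measurable (failIndex Φ) :=
  measurable_of_Ioi fun k => by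
    change MeasurableSet {x | k < failIndex Φ x}
    rw [setOf_lt_failIndex hΦ hΦ0]
    exact measurable_stateAfter k (Finset.measurableSet _)

end FailIndex

section Exchangeable

variable {P : Measure (Fin n → ℝ)}

lemma measure_stateAfter_eq_of_card_eq
    (hexch : ∀ σ : Equiv.Perm (Fin n), MeasurePreserving (· ∘ ⇑σ) P P) (k : ℕ)
    {y y' : Fin n → Bool} (h : #{i | y i = false} = #{i | y' i = false}) :
    P {x | stateAfter x k = y} = P {x | stateAfter x k = y'} := by
  obtain ⟨σ, rfl⟩ := exists_perm_comp_eq h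
  have hpre : (· ∘ ⇑σ.symm) ⁻¹' {x | stateAfter x k = y'} = {x | stateAfter x k = y' ∘ σ} := by
    ext x
    simp [stateAfter_comp_perm, Equiv.comp_symm_eq]
  rw [← hpre]
  exact (hexch σ.symm).measure_preimage (measurableSet_stateAfter_eq k y').nullMeasurableSet

variable [IsProbabilityMeasure P]

lemma measure_stateAfter_eq
    (hexch : ∀ σ : Equiv.Perm (Fin n), MeasurePreserving (· ∘ ⇑σ) P P)
    (hinj : ∀ᵐ x ∂P, Function.Injective x) {k : ℕ} (hk : k ≤ n) (y : Fin n → Bool) :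
    P {x | stateAfter x k = y} =
      if #{i | y i = false} = k then ((n.choose k : ℕ) : ENNReal)⁻¹ else 0 := by
  have hnull (y' : Fin n → Bool) (hy' : #{i | y' i = false} ≠ k) :
      P {x | stateAfter x k = y'} = 0 := by
    refine measure_eq_zero_iff_ae_notMem.2 (hinj.mono fun x hx hxy => hy' ?_)
    rw [← hxy]
    exact card_stateAfter_eq_false hx hk
  split_ifs with hy
  · have hfiber (y' : Fin n → Bool) : P {x | stateAfter x k = y'} =
        if #{i | y' i = false} = k then P {x | stateAfter x k = y} else 0 := by
      split_ifs with hy'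
      · exact measure_stateAfter_eq_of_card_eq hexch k (hy'.trans hy.symm)
      · exact hnull y' hy'
    have htotal : P {x | stateAfter x k = y} * n.choose k = 1 := by
      rw [← measure_univ (μ := P), ← Set.preimage_univ (f := fun x => stateAfter x k), ← coe_univ,
        ← sum_measure_preimage_singleton _ fun y' _ => measurableSet_stateAfter_eq k y']
      simp only [Set.preimage, Set.mem_singleton_iff]
      rw [Finset.sum_congr rfl fun y' _ => hfiber y', sum_ite, sum_const_zero, add_zero,
        sum_const, card_filter_card_eq_false, nsmul_eq_mul, mul_comm]
    exact ENNReal.eq_inv_of_mul_eq_one_left htotal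
  · exact hnull y hy

variable {Φ : (Fin n → Bool) → Bool}

lemma measureReal_lt_failIndex (hΦ : Monotone Φ) (hΦ0 : Φ (fun _ => false) = false)
    (hexch : ∀ σ : Equiv.Perm (Fin n), MeasurePreserving (· ∘ ⇑σ) P P)
    (hinj : ∀ᵐ x ∂P, Function.Injective x) {k : ℕ} (hk : k ≤ n) :
    P.real {x | k < failIndex Φ x} = Sbar n Φ k := by
  rw [measureReal_def, setOf_lt_failIndex hΦ hΦ0,
    ← sum_measure_preimage_singleton _ fun y _ => measurableSet_stateAfter_eq k y]
  simp only [Set.preimage, Set.mem_singleton_iff, measure_stateAfter_eq hexch hinj hk, sum_ite,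
    sum_const_zero, add_zero, sum_const, nsmul_eq_mul, filter_filter]
  rw [Sbar, ENNReal.toReal_mul, ENNReal.toReal_inv, div_eq_mul_inv]
  simp only [ENNReal.toReal_natCast, and_comm]

lemma measureReal_min_failIndex (hΦ : Monotone Φ) (hΦ0 : Φ (fun _ => false) = false)
    (hexch : ∀ σ : Equiv.Perm (Fin n), MeasurePreserving (· ∘ ⇑σ) P P)
    (hinj : ∀ᵐ x ∂P, Function.Injective x) {r : ℕ} (hr1 : 1 ≤ r) (hrn : r ≤ n) :
    (∀ j, 1 ≤ j → j < r → P.real {x | min (failIndex Φ x) r = j} = structSig n Φ j) ∧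
    P.real {x | min (failIndex Φ x) r = r} = ∑ k ∈ Icc r n, structSig n Φ k ∧
    (∀ j, r < j → P.real {x | min (failIndex Φ x) r = j} = 0) := by
  have hSig {k} (hk : k ≤ n) := measureReal_lt_failIndex (Φ := Φ) hΦ hΦ0 hexch hinj hk
  refine ⟨fun j hj1 hjr => ?_, ?_, fun j hj => ?_⟩
  · have hdiff : {x | min (failIndex Φ x) r = j} =
        {x | j - 1 < failIndex Φ x} \ {x | j < failIndex Φ x} := by
      ext x; simp only [Set.mem_ofPred_eq, Set.mem_sdiff]; omega
    have hsub : {x | j < failIndex Φ x} ⊆ {x | j - 1 < failIndex Φ x} := fun x hx => by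
      simp only [Set.mem_ofPred_eq] at hx ⊢; omega
    rw [hdiff, measureReal_sdiff hsub (measurable_failIndex hΦ hΦ0 measurableSet_Ioi),
      hSig (by omega), hSig (by omega), structSig]
  · have hr : {x | min (failIndex Φ x) r = r} = {x | r - 1 < failIndex Φ x} := by
      ext x; simp only [Set.mem_ofPred_eq]; omega
    have hn : Sbar n Φ n = 0 := by
      rw [← hSig le_rfl]
      simp [(failIndex_le hΦ0 _).not_gt]
    rw [hr, hSig (by omega), sum_Icc_structSig Φ hrn, hn, sub_zero]
  · have hempty : {x | min (failIndex Φ x) r = j} = ∅ := by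
      ext x; simp only [Set.mem_ofPred_eq, Set.mem_empty_iff_false, iff_false]; omega
    rw [hempty, measureReal_empty]

end Exchangeable

end StructureFunction

lemma measure_preimage_eq_of_ae_eq {Ω β : Type*} [MeasurableSpace Ω] [MeasurableSpace β]
    {Pr : Measure Ω} {X : Ω → β} (hX : AEMeasurable X Pr) {s t : Set β} (ht : MeasurableSet t)
    (hst : s =ᵐ[Pr.map X] t) : Pr (X ⁻¹' s) = Pr.map X t := by
  rw [← Measure.map_apply₀ hX (ht.nullMeasurableSet.congr hst.symm), measure_congr hst]

lemma measurePreserving_comp_perm {ι α : Type*} [Fintype ι] [MeasurableSpace α] (ν : Measure α)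
    [SigmaFinite ν] (σ : Equiv.Perm ι) :
    MeasurePreserving (fun x : ι → α => x ∘ σ) (Measure.pi fun _ => ν) (Measure.pi fun _ => ν) := by
  convert measurePreserving_piCongrLeft (fun _ : ι => ν) σ.symm
  ext x
  simp [MeasurableEquiv.coe_piCongrLeft, Equiv.piCongrLeft_apply_eq_cast]

lemma ae_injective_pi {ι α : Type*} [Fintype ι] [MeasurableSpace α] [MeasurableEq α]
    (ν : Measure α) [IsProbabilityMeasure ν] [NullSingletonClass ν] :
    ∀ᵐ x ∂(Measure.pi fun _ : ι => ν), Function.Injective x := by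
  have hpair (i j : ι) (hij : i ≠ j) : ∀ᵐ x ∂(Measure.pi fun _ : ι => ν), x i ≠ x j := by
    have hind := (iIndepFun_pi (μ := fun _ : ι => ν) (X := fun _ => id)
      fun _ => aemeasurable_id).indepFun hij
    have hmap := (indepFun_iff_map_prod_eq_prod_map_map (measurable_pi_apply i).aemeasurable
      (measurable_pi_apply j).aemeasurable).1 hind
    have hdiag : {x : ι → α | ¬x i ≠ x j} = (fun x => (x i, x j)) ⁻¹' Set.diagonal α := by
      ext x; simp
    rw [ae_iff, hdiag, ← Measure.map_apply (by fun_prop) measurableSet_diagonal, hmap,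
      (measurePreserving_eval _ i).map_eq, (measurePreserving_eval _ j).map_eq,
      Measure.prod_apply measurableSet_diagonal]
    simp [Set.preimage, Set.diagonal]
  have : ∀ᵐ x ∂(Measure.pi fun _ : ι => ν), ∀ i j, i ≠ j → x i ≠ x j := by
    simp only [ae_all_iff, Filter.eventually_imp_distrib_left]
    exact hpair
  filter_upwards [this] with x hx i j hxij
  by_contra hne
  exact hx i j hne hxij

lemma ae_forall_pi {ι α : Type*} [Fintype ι] [MeasurableSpace α] (ν : Measure α) [SigmaFinite ν]
    {p : α → Prop} (h : ∀ᵐ t ∂ν, p t) : ∀ᵐ x ∂(Measure.pi fun _ : ι => ν), ∀ i, p (x i) :=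
  ae_all_iff.2 fun i => (Measure.quasiMeasurePreserving_eval _ i).ae h

section Exponential

variable {μ : ℝ}

instance nullSingletonClass_expMeasure : NullSingletonClass (expMeasure μ) :=
  nullSingletonClass_withDensity _

lemma ae_pos_expMeasure (hμ : 0 < μ) : ∀ᵐ t ∂expMeasure μ, 0 < t := by
  have := isProbabilityMeasure_expMeasure hμ
  have hIic : expMeasure μ (Set.Iic 0) = 0 := by
    rw [← ofReal_cdf, cdf_expMeasure_eq hμ]
    simp
  exact (measure_eq_zero_iff_ae_notMem.1 hIic).mono fun t ht => not_le.1 ht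

lemma map_eq_expMeasure {Ω : Type*} [MeasurableSpace Ω] {Pr : Measure Ω}
    [IsProbabilityMeasure Pr] (hμ : 0 < μ) {X : Ω → ℝ} (hX : Measurable X)
    (hexp : ∀ t, 0 ≤ t → Pr {ω | t < X ω} = ENNReal.ofReal (Real.exp (-μ * t))) :
    Pr.map X = expMeasure μ := by
  have := isProbabilityMeasure_expMeasure hμ
  have hsurv (t : ℝ) : Pr {ω | t < X ω} = ENNReal.ofReal (Real.exp (-μ * max t 0)) := by
    rcases le_total 0 t with ht | ht
    · rw [max_eq_left ht, hexp t ht]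
    · rw [max_eq_right ht, mul_zero, Real.exp_zero, ENNReal.ofReal_one]
      refine le_antisymm prob_le_one ?_
      calc 1 = Pr {ω | 0 < X ω} := by simp [hexp 0 le_rfl]
        _ ≤ Pr {ω | t < X ω} := measure_mono fun ω (h : 0 < X ω) => ht.trans_lt h
  have hcompl (a : ℝ) : X ⁻¹' Set.Iic a = {ω | a < X ω}ᶜ := by ext; simp
  refine Measure.ext_of_Iic _ _ fun a => ?_
  rw [Measure.map_apply hX measurableSet_Iic, ← ofReal_cdf, cdf_expMeasure_eq hμ, hcompl,
    prob_compl_eq_one_sub (measurableSet_lt measurable_const hX), hsurv]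
  split_ifs with ha
  · rw [max_eq_left ha, ENNReal.ofReal_sub _ (Real.exp_nonneg _), ENNReal.ofReal_one, neg_mul]
  · simp [max_eq_right (not_le.1 ha).le]

end Exponential

/-- Distribution of the number of failed components at the first repair under the
`r`-out-of-`n`:R policy, for a semi-coherent system with i.i.d. exponential
component lifetimes: `P(N(T_rep) = j) = s_j` for `j < r`,
`P(N(T_rep) = r) = Σ_{k=r}^{n} s_k`, and `P(N(T_rep) = j) = 0` for `j > r`,
where `T_rep = min{T_fail, T_{r:n}}` and `N(T_rep) = #{i : T_i ≤ T_rep}`. -/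
theorem stmt17 {Ω : Type*} [MeasurableSpace Ω] (Pr : Measure Ω) [IsProbabilityMeasure Pr]
    (n : ℕ) (Φ : (Fin n → Bool) → Bool)
    (hmono : ∀ x y : Fin n → Bool, (∀ i, x i ≤ y i) → Φ x ≤ Φ y)
    (hΦ0 : Φ (fun _ => false) = false) (hΦ1 : Φ (fun _ => true) = true)
    (μ : ℝ) (hμ : 0 < μ)
    (T : Fin n → Ω → ℝ)
    (hmeas : ∀ i, Measurable (T i))
    (hindep : iIndepFun T Pr)
    (hexp : ∀ (i : Fin n) (t : ℝ), 0 ≤ t →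
      Pr {ω | t < T i ω} = ENNReal.ofReal (Real.exp (-μ * t)))
    (r : ℕ) (hr1 : 1 ≤ r) (hrn : r ≤ n) :
    (∀ j, 1 ≤ j → j < r →
      (Pr {ω | (Finset.univ.filter (fun i : Fin n =>
          T i ω ≤ min (failTime n Φ (fun i' => T i' ω))
            (orderStat n (fun i' => T i' ω) ⟨r - 1, by omega⟩))).card = j}).toReal =
        structSig n Φ j) ∧
    ((Pr {ω | (Finset.univ.filter (fun i : Fin n =>
        T i ω ≤ min (failTime n Φ (fun i' => T i' ω))
          (orderStat n (fun i' => T i' ω) ⟨r - 1, by omega⟩))).card = r}).toReal =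
      ∑ k ∈ Finset.Icc r n, structSig n Φ k) ∧
    (∀ j, r < j →
      (Pr {ω | (Finset.univ.filter (fun i : Fin n =>
          T i ω ≤ min (failTime n Φ (fun i' => T i' ω))
            (orderStat n (fun i' => T i' ω) ⟨r - 1, by omega⟩))).card = j}).toReal =
        0) := by
  have hΦ : Monotone Φ := fun x y h => hmono x y h
  have := isProbabilityMeasure_expMeasure hμ
  have hX : Measurable fun ω i => T i ω := measurable_pi_lambda _ hmeas
  have hlaw : Pr.map (fun ω i => T i ω) = Measure.pi fun _ => expMeasure μ := by
    rw [(iIndepFun_iff_map_fun_eq_pi_map fun i => (hmeas i).aemeasurable).1 hindep]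
    exact congrArg Measure.pi (funext fun i => map_eq_expMeasure hμ (hmeas i) (hexp i))
  have hinj := ae_injective_pi (ι := Fin n) (expMeasure μ)
  have hpos := ae_forall_pi (ι := Fin n) _ ((ae_pos_expMeasure hμ).mono fun _ ht => ht.le)
  have hcount (j : ℕ) : Pr ((fun ω i => T i ω) ⁻¹' {x | #{i | x i ≤ min (failTime n Φ x)
      (orderStat n x ⟨r - 1, by omega⟩)} = j}) =
      Measure.pi (fun _ => expMeasure μ) {x | min (failIndex Φ x) r = j} := by
    rw [measure_preimage_eq_of_ae_eq hX.aemeasurable (t := {x | min (failIndex Φ x) r = j})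
      ((measurable_failIndex hΦ hΦ0).min measurable_const (measurableSet_singleton j)), hlaw]
    rw [hlaw, Filter.eventuallyEq_set]
    filter_upwards [hinj, hpos] with x hx hx0
    simp only [card_filter_le_min_failTime_orderStat hΦ hΦ0 hΦ1 hx hx0, Nat.sub_add_cancel hr1]
  obtain ⟨hlt, heq, hgt⟩ :=
    measureReal_min_failIndex hΦ hΦ0 (measurePreserving_comp_perm _) hinj hr1 hrn
  exact ⟨fun j hj hjr => (congrArg ENNReal.toReal (hcount j)).trans (hlt j hj hjr),
    (congrArg ENNReal.toReal (hcount r)).trans heq,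
    fun j hj => (congrArg ENNReal.toReal (hcount j)).trans (hgt j hj)⟩
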